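/- arXiv:1906.11657 — 3 statements merged into one kernel-verified Lean document; each statement's English description precedes it below -/
import Mathlib

section
/- For all real constants α > 1 and β > 0, and for every sequence of natural numbers (k_n) with k_n ≤ n for all n, the limit superior as n → ∞ of n·(1 − (1 − 1/n²)^{k_n}) + (α/β)·(1 − 1/n²)^{k_n}·(1 − (1 − β/n)^{n − k_n}) is at most 1 + (α − 1 − ln α)/β. -/
open Filter Real

private lemma esp_key (α β : ℝ) (hα : 1 < α) (hβ : 0 < β) (x : ℝ) :
    x + (α / β) * (1 - Real.exp (-(β * (1 - x)))) ≤ 1 + (α - 1 - Real.log α) / β := by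
  have hαpos : (0:ℝ) < α := by linarith
  have hy : (0:ℝ) < α * Real.exp (-(β * (1 - x))) :=
    mul_pos hαpos (Real.exp_pos _)
  have hlog := Real.log_le_sub_one_of_pos hy
  rw [Real.log_mul (ne_of_gt hαpos) (ne_of_gt (Real.exp_pos _)), Real.log_exp] at hlog
  rw [show (1:ℝ) + (α - 1 - Real.log α) / β = (β + (α - 1 - Real.log α)) / β by
        field_simp,
      show x + (α / β) * (1 - Real.exp (-(β * (1 - x)))) =
          (β * x + α * (1 - Real.exp (-(β * (1 - x))))) / β by field_simp]
  rw [div_le_div_iff₀ hβ hβ]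
  nlinarith [hlog, Real.exp_pos (-(β * (1 - x)))]

set_option maxHeartbeats 1000000 in
private lemma esp_bound (α β : ℝ) (hα : 1 < α) (hβ : 0 < β)
    (n kn : ℕ) (hkn : kn ≤ n) (hnR : (2:ℝ) ≤ (n:ℝ)) (h2β : 2 * β ≤ (n:ℝ)) :
    0 ≤ (n : ℝ) * (1 - (1 - 1 / (n : ℝ) ^ 2) ^ kn) +
          (α / β) * (1 - 1 / (n : ℝ) ^ 2) ^ kn * (1 - (1 - β / (n : ℝ)) ^ (n - kn)) ∧
      (n : ℝ) * (1 - (1 - 1 / (n : ℝ) ^ 2) ^ kn) +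
          (α / β) * (1 - 1 / (n : ℝ) ^ 2) ^ kn * (1 - (1 - β / (n : ℝ)) ^ (n - kn)) ≤
        (1 + (α - 1 - Real.log α) / β) + 2 * α * β / n := by
  have hαpos : (0:ℝ) < α := by linarith
  have hnpos : (0:ℝ) < n := by linarith
  set t : ℝ := β / n with ht
  clear_value t
  have htpos : 0 < t := by rw [ht]; exact div_pos hβ hnpos
  have ht2 : t ≤ 1 / 2 := by
    rw [ht, div_le_div_iff₀ hnpos (by norm_num)]
    linarith
  set x : ℝ := (kn : ℝ) / n with hx
  clear_value x
  have hx0 : 0 ≤ x := by rw [hx]; exact div_nonneg (Nat.cast_nonneg _) (le_of_lt hnpos)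
  have hx1 : x ≤ 1 := by
    rw [hx, div_le_one hnpos]
    exact_mod_cast hkn
  have hmcast : ((n - kn : ℕ) : ℝ) = (n : ℝ) - (kn : ℝ) := by
    rw [Nat.cast_sub hkn]
  have hinv : 1 / (n:ℝ) ^ 2 ≤ 1 := by
    rw [div_le_one (by positivity)]
    nlinarith
  have hp0 : (0:ℝ) ≤ (1 - 1 / (n:ℝ) ^ 2) := by linarith
  have hp1 : (1 - 1 / (n:ℝ) ^ 2) ^ kn ≤ 1 :=
    pow_le_one₀ hp0 (by linarith [div_nonneg (zero_le_one) (sq_nonneg (n:ℝ))] :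
      (1 - 1/(n:ℝ)^2) ≤ 1)
  have hp0' : (0:ℝ) ≤ (1 - 1 / (n:ℝ) ^ 2) ^ kn := pow_nonneg hp0 _
  have hbern : 1 - (kn : ℝ) / (n:ℝ)^2 ≤ (1 - 1 / (n:ℝ) ^ 2) ^ kn := by
    have := one_add_mul_le_pow (a := -(1 / (n:ℝ)^2)) (by nlinarith [sq_nonneg (n:ℝ)]) kn
    calc 1 - (kn : ℝ) / (n:ℝ)^2 = 1 + (kn : ℝ) * (-(1/(n:ℝ)^2)) := by ring
      _ ≤ (1 + -(1/(n:ℝ)^2)) ^ kn := this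
      _ = (1 - 1 / (n:ℝ)^2) ^ kn := by ring_nf
  have hpiece1 : (n:ℝ) * (1 - (1 - 1 / (n:ℝ) ^ 2) ^ kn) ≤ x := by
    have h1 : (n:ℝ) * (1 - (1 - 1 / (n:ℝ) ^ 2) ^ kn) ≤ (n:ℝ) * ((kn : ℝ) / (n:ℝ)^2) :=
      mul_le_mul_of_nonneg_left (by linarith) (le_of_lt hnpos)
    calc (n:ℝ) * (1 - (1 - 1 / (n:ℝ) ^ 2) ^ kn) ≤ (n:ℝ) * ((kn : ℝ) / (n:ℝ)^2) := h1
      _ = x := by rw [hx]; field_simp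
  have h1t : (0:ℝ) < 1 - t := by linarith
  have hq1 : (1 - t) ^ (n - kn) ≤ 1 := pow_le_one₀ (by linarith) (by linarith)
  have hloglb : -t - 2 * t ^ 2 ≤ Real.log (1 - t) := by
    have h := Real.log_le_sub_one_of_pos (inv_pos.mpr h1t)
    rw [Real.log_inv] at h
    have hinv1t : (1 - t)⁻¹ ≤ 1 + t + 2 * t ^ 2 := by
      rw [inv_le_iff_one_le_mul₀ h1t]
      nlinarith [mul_nonneg (by linarith : (0:ℝ) ≤ 1 - 2*t) (sq_nonneg t)]
    linarith
  have hm_le : ((n - kn : ℕ) : ℝ) ≤ (n : ℝ) := by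
    rw [hmcast]; linarith [(Nat.cast_nonneg kn : (0:ℝ) ≤ (kn:ℝ))]
  have hm0 : (0:ℝ) ≤ ((n - kn : ℕ) : ℝ) := Nat.cast_nonneg _
  have hpowlog : (1 - t) ^ (n - kn) = Real.exp (((n - kn : ℕ) : ℝ) * Real.log (1 - t)) := by
    rw [← Real.log_pow, Real.exp_log (pow_pos h1t _)]
  have hE1 : Real.exp (-(β * (1 - x))) ≤ 1 := Real.exp_le_one_iff.mpr (by nlinarith)
  have hexplb : Real.exp (-(β * (1 - x))) - 2 * β ^ 2 / n ≤ (1 - t) ^ (n - kn) := by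
    rw [hpowlog]
    have harg : -(β * (1 - x)) - 2 * β ^ 2 / n ≤ ((n - kn : ℕ) : ℝ) * Real.log (1 - t) := by
      have h1 : ((n - kn : ℕ) : ℝ) * (-t - 2 * t ^ 2) ≤ ((n - kn : ℕ) : ℝ) * Real.log (1 - t) :=
        mul_le_mul_of_nonneg_left hloglb hm0
      have h2 : ((n - kn : ℕ) : ℝ) * t = β * (1 - x) := by
        rw [hmcast, ht, hx]; field_simp
      have h3 : ((n - kn : ℕ) : ℝ) * (2 * t ^ 2) ≤ 2 * β ^ 2 / n := by
        have hstep : ((n - kn : ℕ) : ℝ) * (2 * t ^ 2) ≤ (n:ℝ) * (2 * t ^ 2) :=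
          mul_le_mul_of_nonneg_right hm_le (by positivity)
        have heq : (n:ℝ) * (2 * t ^ 2) = 2 * β ^ 2 / n := by
          rw [ht]
          field_simp
        linarith
      nlinarith
    calc Real.exp (-(β * (1 - x))) - 2 * β ^ 2 / n
        ≤ Real.exp (-(β * (1 - x))) * Real.exp (-(2 * β ^ 2 / n)) := by
          have h5 : 1 - 2 * β^2 / n ≤ Real.exp (-(2 * β^2 / n)) := by
            linarith [Real.add_one_le_exp (-(2 * β^2 / n))]
          have h6 : (0:ℝ) ≤ 2 * β^2/n := by positivity
          nlinarith [Real.exp_pos (-(β*(1-x)))]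
      _ = Real.exp (-(β * (1 - x)) + -(2 * β ^ 2 / n)) := (Real.exp_add _ _).symm
      _ ≤ Real.exp (((n - kn : ℕ) : ℝ) * Real.log (1 - t)) := Real.exp_le_exp.mpr (by linarith)
  have hQ0 : (0:ℝ) ≤ 1 - Real.exp (-(β * (1 - x))) + 2 * β ^ 2 / n := by
    have : (0:ℝ) ≤ 2*β^2/n := by positivity
    linarith
  have hpiece2 : (α / β) * (1 - 1 / (n:ℝ) ^ 2) ^ kn * (1 - (1 - t) ^ (n - kn)) ≤
      (α / β) * (1 - Real.exp (-(β * (1 - x))) + 2 * β ^ 2 / n) := by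
    have hq : 1 - (1 - t) ^ (n - kn) ≤ 1 - Real.exp (-(β * (1 - x))) + 2 * β ^ 2 / n := by
      linarith
    have hab : (0:ℝ) ≤ α / β := le_of_lt (div_pos hαpos hβ)
    calc (α / β) * (1 - 1 / (n:ℝ) ^ 2) ^ kn * (1 - (1 - t) ^ (n - kn))
        ≤ (α / β) * (1 - 1 / (n:ℝ) ^ 2) ^ kn *
            (1 - Real.exp (-(β * (1 - x))) + 2 * β ^ 2 / n) :=
          mul_le_mul_of_nonneg_left hq (mul_nonneg hab hp0')
      _ ≤ (α / β) * 1 * (1 - Real.exp (-(β * (1 - x))) + 2 * β ^ 2 / n) :=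
          mul_le_mul_of_nonneg_right (mul_le_mul_of_nonneg_left hp1 hab) hQ0
      _ = (α / β) * (1 - Real.exp (-(β * (1 - x))) + 2 * β ^ 2 / n) := by ring
  constructor
  · have hA : (0:ℝ) ≤ (n:ℝ) * (1 - (1 - 1 / (n:ℝ) ^ 2) ^ kn) :=
      mul_nonneg (le_of_lt hnpos) (by linarith)
    have hBp : (0:ℝ) ≤ (α / β) * (1 - 1 / (n:ℝ) ^ 2) ^ kn * (1 - (1 - t) ^ (n - kn)) :=
      mul_nonneg (mul_nonneg (le_of_lt (div_pos hαpos hβ)) hp0') (by linarith)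
    linarith
  · have hkey := esp_key α β hα hβ x
    have hsplit : (α / β) * (1 - Real.exp (-(β * (1 - x))) + 2 * β ^ 2 / n)
        = (α / β) * (1 - Real.exp (-(β * (1 - x)))) + 2 * α * β / n := by
      field_simp
    rw [hsplit] at hpiece2
    linarith

set_option maxHeartbeats 1000000 in
theorem esp_revenue_limsup (α β : ℝ) (hα : 1 < α) (hβ : 0 < β)
    (k : ℕ → ℕ) (hk : ∀ n, k n ≤ n) :
    Filter.limsup
        (fun n : ℕ =>
          (n : ℝ) * (1 - (1 - 1 / (n : ℝ) ^ 2) ^ (k n)) +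
            (α / β) * (1 - 1 / (n : ℝ) ^ 2) ^ (k n) *
              (1 - (1 - β / (n : ℝ)) ^ (n - k n)))
        Filter.atTop ≤
      1 + (α - 1 - Real.log α) / β := by
  have hev : ∀ᶠ n : ℕ in atTop,
      (0 ≤ (n : ℝ) * (1 - (1 - 1 / (n : ℝ) ^ 2) ^ (k n)) +
            (α / β) * (1 - 1 / (n : ℝ) ^ 2) ^ (k n) *
              (1 - (1 - β / (n : ℝ)) ^ (n - k n))) ∧
      ((n : ℝ) * (1 - (1 - 1 / (n : ℝ) ^ 2) ^ (k n)) +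
            (α / β) * (1 - 1 / (n : ℝ) ^ 2) ^ (k n) *
              (1 - (1 - β / (n : ℝ)) ^ (n - k n)) ≤
        (1 + (α - 1 - Real.log α) / β) + 2 * α * β / n) := by
    filter_upwards [eventually_ge_atTop (max 2 (⌈2 * β⌉₊))] with n hn
    have hn2 : (2:ℕ) ≤ n := le_trans (le_max_left _ _) hn
    have hnc : (⌈2 * β⌉₊ : ℕ) ≤ n := le_trans (le_max_right _ _) hn
    have hnR : (2:ℝ) ≤ (n:ℝ) := by exact_mod_cast hn2
    have h2β : 2 * β ≤ (n:ℝ) := le_trans (Nat.le_ceil _) (by exact_mod_cast hnc)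
    exact esp_bound α β hα hβ n (k n) (hk n) hnR h2β
  have htend : Tendsto (fun n : ℕ => (1 + (α - 1 - Real.log α) / β) + 2 * α * β / n) atTop
      (nhds (1 + (α - 1 - Real.log α) / β)) := by
    have := (tendsto_const_nhds
        (x := (1 + (α - 1 - Real.log α) / β)) (f := atTop (α := ℕ))).add
      (tendsto_const_div_atTop_nhds_zero_nat (2 * α * β))
    simpa using this
  have hco : IsCoboundedUnder (· ≤ ·) atTop (fun n : ℕ =>
      (n : ℝ) * (1 - (1 - 1 / (n : ℝ) ^ 2) ^ (k n)) +
        (α / β) * (1 - 1 / (n : ℝ) ^ 2) ^ (k n) *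
          (1 - (1 - β / (n : ℝ)) ^ (n - k n))) :=
    isCoboundedUnder_le_of_eventually_le atTop (x := 0) (hev.mono fun n h => h.1)
  have hbd : IsBoundedUnder (· ≤ ·) atTop
      (fun n : ℕ => (1 + (α - 1 - Real.log α) / β) + 2 * α * β / n) :=
    htend.isBoundedUnder_le
  calc Filter.limsup
        (fun n : ℕ =>
          (n : ℝ) * (1 - (1 - 1 / (n : ℝ) ^ 2) ^ (k n)) +
            (α / β) * (1 - 1 / (n : ℝ) ^ 2) ^ (k n) *
              (1 - (1 - β / (n : ℝ)) ^ (n - k n))) atTop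
      ≤ Filter.limsup
          (fun n : ℕ => (1 + (α - 1 - Real.log α) / β) + 2 * α * β / n) atTop :=
        limsup_le_limsup (hev.mono fun n h => h.2) hco hbd
    _ = 1 + (α - 1 - Real.log α) / β := htend.limsup_eq
end

section
/- With α = 2.91 and β = 1.89, for every real number z with 0 ≤ z ≤ 1 it holds that z + (α/β)·(1 − e^{−β(1 − z)}) < 0.778 · (1 + ((α − 1)/β)·(1 − e^{−β})). -/
open Real Finset

lemma exp_upper : Real.exp 1.06815 ≤ 2.91 := by
  have h : (1.06815 : ℝ) = 1 + 0.06815 := by norm_num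
  rw [h, Real.exp_add]
  have h1 : Real.exp 1 ≤ 2.7182818286 := Real.exp_one_lt_d9.le
  have h2 : Real.exp 0.06815 ≤
      (∑ m ∈ Finset.range 4, (0.06815:ℝ) ^ m / m.factorial) +
        (0.06815:ℝ) ^ 4 * (4 + 1) / (Nat.factorial 4 * 4) :=
    Real.exp_bound' (by norm_num) (by norm_num) (by norm_num)
  have h3 : (∑ m ∈ Finset.range 4, (0.06815:ℝ) ^ m / m.factorial) +
      (0.06815:ℝ) ^ 4 * (4 + 1) / (Nat.factorial 4 * 4) ≤ 1.07052614 := by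
    simp [Finset.sum_range_succ, Nat.factorial]
    norm_num
  nlinarith [Real.exp_pos (1:ℝ), Real.exp_pos (0.06815:ℝ)]

lemma exp_lower : (6.6191 : ℝ) ≤ Real.exp 1.89 := by
  have h : (1.89 : ℝ) = 1 + 0.89 := by norm_num
  rw [h, Real.exp_add]
  have h1 : (2.7182818283 : ℝ) ≤ Real.exp 1 := Real.exp_one_gt_d9.le
  have h2 : (∑ m ∈ Finset.range 8, (0.89:ℝ) ^ m / m.factorial) ≤ Real.exp 0.89 :=
    Real.sum_le_exp_of_nonneg (by norm_num) 8
  have h3 : (2.435118 : ℝ) ≤ ∑ m ∈ Finset.range 8, (0.89:ℝ) ^ m / m.factorial := by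
    simp [Finset.sum_range_succ, Nat.factorial]
    norm_num
  nlinarith [Real.exp_pos (1:ℝ), Real.exp_pos (0.89:ℝ)]

theorem esp_separation_pointwise (z : ℝ) (hz0 : 0 ≤ z) (hz1 : z ≤ 1) :
    z + (2.91 / 1.89) * (1 - Real.exp (-(1.89 * (1 - z)))) <
      0.778 * (1 + ((2.91 - 1) / 1.89) * (1 - Real.exp (-1.89))) := by
  set t : ℝ := -(1.89 * (1 - z)) with ht
  -- tangent lower bound for exp t
  have htan : (1 + (t + 1.06815)) * (Real.exp 1.06815)⁻¹ ≤ Real.exp t := by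
    have e1 : Real.exp t = Real.exp (t + 1.06815) * (Real.exp 1.06815)⁻¹ := by
      rw [← Real.exp_neg, ← Real.exp_add]; ring_nf
    have e2 : t + 1.06815 + 1 ≤ Real.exp (t + 1.06815) := Real.add_one_le_exp _
    rw [e1]
    have hpos : (0:ℝ) < (Real.exp 1.06815)⁻¹ := by positivity
    nlinarith
  have hinv : (2.91 : ℝ)⁻¹ ≤ (Real.exp 1.06815)⁻¹ := by
    apply inv_anti₀ (by positivity) exp_upper
  have hcoef : (0:ℝ) ≤ 1 + (t + 1.06815) := by
    have : (-1.89 : ℝ) ≤ t := by rw [ht]; nlinarith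
    linarith
  have hlow : (1 + (t + 1.06815)) * (2.91 : ℝ)⁻¹ ≤ Real.exp t := by
    calc (1 + (t + 1.06815)) * (2.91 : ℝ)⁻¹
        ≤ (1 + (t + 1.06815)) * (Real.exp 1.06815)⁻¹ := by
          apply mul_le_mul_of_nonneg_left hinv hcoef
      _ ≤ Real.exp t := htan
  have hneg : Real.exp (-1.89 : ℝ) ≤ (6.6191 : ℝ)⁻¹ := by
    rw [Real.exp_neg]
    exact inv_anti₀ (by norm_num) exp_lower
  have := hlow
  rw [ht] at this
  nlinarith [this, hneg]
end

section
/- The sequence max(n·(1 − (1 − 1/n²)^n), 1) / (1 + ((n − 1)/n)·(1 − e^{−n})), indexed by positive integers n, converges to 1/2 as n → ∞. -/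
open Filter Real

theorem asp_ratio_limit :
    Tendsto
      (fun n : ℕ =>
        max ((n : ℝ) * (1 - (1 - 1 / (n : ℝ) ^ 2) ^ n)) 1 /
          (1 + (((n : ℝ) - 1) / (n : ℝ)) * (1 - Real.exp (-(n : ℝ)))))
      atTop (nhds (1 / 2)) := by
  have hfun : ∀ n : ℕ, max ((n : ℝ) * (1 - (1 - 1 / (n : ℝ) ^ 2) ^ n)) 1 = 1 := by
    intro n
    rcases Nat.eq_zero_or_pos n with h | h
    · subst h; simp
    · have hn : (0:ℝ) < n := by exact_mod_cast h
      have hn2 : (0:ℝ) < (n:ℝ)^2 := by positivity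
      have ha : (-2:ℝ) ≤ -(1 / (n:ℝ)^2) := by
        have h1 : 1/(n:ℝ)^2 ≤ 1 := by
          rw [div_le_one hn2]
          have hn1 : (1:ℝ) ≤ n := by exact_mod_cast h
          nlinarith
        linarith
      have hb := one_add_mul_le_pow ha n
      have hsq : (n:ℝ) * ((n:ℝ) * (1/(n:ℝ)^2)) = 1 := by
        field_simp
      apply max_eq_right
      have h2 : 1 + (n:ℝ) * (-(1/(n:ℝ)^2)) ≤ (1 + -(1/(n:ℝ)^2))^n := hb
      have h3 : (1 + -(1/(n:ℝ)^2)) = (1 - 1/(n:ℝ)^2) := by ring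
      rw [h3] at h2
      nlinarith [h2, hsq, hn]
  simp only [hfun]
  have hd : Tendsto (fun n : ℕ =>
      1 + (((n : ℝ) - 1) / (n : ℝ)) * (1 - Real.exp (-(n : ℝ)))) atTop (nhds 2) := by
    have h1 : Tendsto (fun n : ℕ => ((n : ℝ) - 1) / (n : ℝ)) atTop (nhds 1) := by
      have : (fun n : ℕ => ((n : ℝ) - 1) / (n : ℝ)) =ᶠ[atTop]
          (fun n : ℕ => 1 - 1 / (n : ℝ)) := by
        filter_upwards [eventually_gt_atTop 0] with n hn
        have hn' : (n:ℝ) ≠ 0 := by positivity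
        field_simp
      rw [Filter.tendsto_congr' this]
      have h := ((tendsto_const_nhds : Tendsto (fun _ : ℕ => (1:ℝ)) atTop (nhds 1)).sub
        tendsto_one_div_atTop_nhds_zero_nat)
      simpa using h
    have h2 : Tendsto (fun n : ℕ => Real.exp (-(n : ℝ))) atTop (nhds 0) := by
      exact Real.tendsto_exp_neg_atTop_nhds_zero.comp tendsto_natCast_atTop_atTop
    have h3 : Tendsto (fun n : ℕ =>
        1 + (((n : ℝ) - 1) / (n : ℝ)) * (1 - Real.exp (-(n : ℝ)))) atTop
        (nhds (1 + 1 * (1 - 0))) :=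
      tendsto_const_nhds.add (h1.mul (tendsto_const_nhds.sub h2))
    have h4 : (2:ℝ) = 1 + 1 * (1 - 0) := by norm_num
    rw [h4]; exact h3
  have := (tendsto_const_nhds (x := (1:ℝ))).div hd (by norm_num)
  exact this
end
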